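/- arXiv:2405.06805 — 4 statements merged into one kernel-verified Lean document; each statement's English description precedes it below -/
import Mathlib

section
/- Let m ≥ 2, let N > 0 and β > 0 be real numbers. For each i ∈ {1,…,m−1}, let L_i be a real number with 0 ≤ L_i ≤ N and let q_{i,0}, q_{i,1}, …, q_{i,m−1} be nonnegative reals with Σ_{j=0}^{m−1} q_{i,j} = 1 and q_{i,0} ≥ β. Suppose x = (x₁,…,x_{m−1}) ∈ ℝ^{m−1} and y ∈ ℝ satisfy 0 ≤ y ≤ N and, for every i ∈ {1,…,m−1}, L_i + Σ_{j=1}^{m−1} q_{i,j}·x_j − x_i = y. Then |x_i| ≤ β⁻¹·N for every i ∈ {1,…,m−1}; that is, x ∈ [−β⁻¹N, β⁻¹N]^{m−1}. -/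
/-- If `(x, y)` is a multi-typed intersection point of the hyperplanes
`f_i(x) = L i + ∑_{j≥1} q i j * x j − x i` (for `i = 1, …, m−1`), where each cost
`L i ∈ [0, N]`, each row `q i` is a probability vector with `q i 0 ≥ β`, and the
common height satisfies `0 ≤ y ≤ N`, then `|x i| ≤ β⁻¹ N` for all `i ≥ 1`.
(`m ≥ 2` is encoded by using `m + 2` states.) -/
theorem stmt_1 (m : ℕ) (N β : ℝ) (hN : 0 < N) (hβ : 0 < β)
    (L : Fin (m + 2) → ℝ) (q : Fin (m + 2) → Fin (m + 2) → ℝ)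
    (hL0 : ∀ i, i ≠ 0 → 0 ≤ L i) (hLN : ∀ i, i ≠ 0 → L i ≤ N)
    (hq : ∀ i, i ≠ 0 → ∀ j, 0 ≤ q i j)
    (hqsum : ∀ i, i ≠ 0 → ∑ j, q i j = 1)
    (hq0 : ∀ i, i ≠ 0 → β ≤ q i 0)
    (x : Fin (m + 2) → ℝ) (y : ℝ) (hy0 : 0 ≤ y) (hyN : y ≤ N)
    (heq : ∀ i, i ≠ 0 →
      L i + (∑ j ∈ Finset.univ.erase 0, q i j * x j) - x i = y) :
    ∀ i : Fin (m + 2), i ≠ 0 → |x i| ≤ β⁻¹ * N := by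
  set S := (Finset.univ : Finset (Fin (m + 2))).erase 0 with hS
  have hSne : S.Nonempty := ⟨1, by simp [hS, Fin.ext_iff]⟩
  obtain ⟨i₀, hi₀S, hmax⟩ := S.exists_max_image (fun i => |x i|) hSne
  have hi₀ : i₀ ≠ 0 := Finset.ne_of_mem_erase hi₀S
  -- bound |x i₀|
  have hx0 : x i₀ = L i₀ - y + ∑ j ∈ S, q i₀ j * x j := by
    have := heq i₀ hi₀; linarith
  have hsumS : ∑ j ∈ S, q i₀ j ≤ 1 - β := by
    have h1 : q i₀ 0 + ∑ j ∈ S, q i₀ j = 1 := by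
      have h := Finset.add_sum_erase Finset.univ (q i₀) (Finset.mem_univ (0 : Fin (m + 2)))
      rw [hS, h]
      exact hqsum i₀ hi₀
    have := hq0 i₀ hi₀; linarith
  have hLy : |L i₀ - y| ≤ N := by
    have := hL0 i₀ hi₀; have := hLN i₀ hi₀
    rw [abs_le]; constructor <;> linarith
  have hsumbd : |∑ j ∈ S, q i₀ j * x j| ≤ (1 - β) * |x i₀| := by
    calc |∑ j ∈ S, q i₀ j * x j| ≤ ∑ j ∈ S, |q i₀ j * x j| :=
          Finset.abs_sum_le_sum_abs _ _
      _ ≤ ∑ j ∈ S, q i₀ j * |x i₀| := by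
          apply Finset.sum_le_sum
          intro j hj
          rw [abs_mul, abs_of_nonneg (hq i₀ hi₀ j)]
          exact mul_le_mul_of_nonneg_left (hmax j hj) (hq i₀ hi₀ j)
      _ = (∑ j ∈ S, q i₀ j) * |x i₀| := by rw [Finset.sum_mul]
      _ ≤ (1 - β) * |x i₀| := by
          apply mul_le_mul_of_nonneg_right hsumS (abs_nonneg _)
  have hbd : |x i₀| ≤ β⁻¹ * N := by
    have h1 : |x i₀| ≤ N + (1 - β) * |x i₀| := by
      calc |x i₀| = |L i₀ - y + ∑ j ∈ S, q i₀ j * x j| := by rw [hx0]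
        _ ≤ |L i₀ - y| + |∑ j ∈ S, q i₀ j * x j| := abs_add_le _ _
        _ ≤ N + (1 - β) * |x i₀| := add_le_add hLy hsumbd
    have h2 : β * |x i₀| ≤ N := by nlinarith
    rw [inv_mul_eq_div, le_div_iff₀ hβ]
    linarith
  intro i hi
  exact le_trans (hmax i (Finset.mem_erase.2 ⟨hi, Finset.mem_univ i⟩)) hbd
end

section
/- Let m ≥ 1 and let Q be an m × m real row-stochastic matrix (all entries nonnegative, each row summing to 1), indexed by {0,1,…,m−1}, such that Q_{k,0} > 0 for every k. Then for any real numbers L₀,…,L_{m−1} there exists a unique pair (x, y) with x = (x₁,…,x_{m−1}) ∈ ℝ^{m−1} and y ∈ ℝ satisfying the m equations: L₀ + Σ_{j=1}^{m−1} Q_{0,j}·x_j = y, and L_k + Σ_{j=1}^{m−1} Q_{k,j}·x_j − x_k = y for every k ∈ {1,…,m−1}. -/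
section Aux

variable {m : ℕ}

/-- Extend a vector on nonzero states by `0` at state `0`. -/
noncomputable def extVec (v : {j : Fin (m + 1) // j ≠ 0} → ℝ) (k : Fin (m + 1)) : ℝ :=
  if h : k ≠ 0 then v ⟨k, h⟩ else 0

lemma sum_subtype_eq (f : Fin (m + 1) → ℝ) (hf : f 0 = 0) :
    ∑ j : {j : Fin (m + 1) // j ≠ 0}, f j = ∑ j, f j := by
  rw [← Finset.sum_subtype (Finset.univ.erase 0) (by simp) f]
  rw [← Finset.add_sum_erase Finset.univ f (Finset.mem_univ 0), hf, zero_add]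

/-- The linear map encoding the system. -/
noncomputable def Tmap (Q : Fin (m + 1) → Fin (m + 1) → ℝ) :
    (({j : Fin (m + 1) // j ≠ 0} → ℝ) × ℝ) →ₗ[ℝ] (Fin (m + 1) → ℝ) where
  toFun p k := (∑ j : {j : Fin (m + 1) // j ≠ 0}, Q k j * p.1 j) - extVec p.1 k - p.2
  map_add' p q := by
    funext k
    simp only [Prod.fst_add, Prod.snd_add, Pi.add_apply, extVec]
    by_cases h : k ≠ 0 <;>
      simp [h, mul_add, Finset.sum_add_distrib] <;> ring
  map_smul' c p := by
    funext k
    simp only [Prod.smul_fst, Prod.smul_snd, Pi.smul_apply, smul_eq_mul, extVec,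
      RingHom.id_apply]
    by_cases h : k ≠ 0 <;>
      simp [h, mul_sub, Finset.mul_sum, mul_assoc, mul_left_comm]

lemma Tmap_inj (Q : Fin (m + 1) → Fin (m + 1) → ℝ)
    (hQ : ∀ k j, 0 ≤ Q k j) (hQrow : ∀ k, ∑ j, Q k j = 1)
    (hQ0 : ∀ k, 0 < Q k 0) : Function.Injective (Tmap Q) := by
  rw [injective_iff_map_eq_zero]
  intro p hp
  set x : Fin (m + 1) → ℝ := extVec p.1 with hx
  have hx0 : x 0 = 0 := by simp [hx, extVec]
  have key : ∀ k, ∑ j, Q k j * x j = x k + p.2 := by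
    intro k
    have h1 : (∑ j : {j : Fin (m + 1) // j ≠ 0}, Q k j * p.1 j) - x k - p.2 = 0 := by
      have := congrFun hp k
      simpa [Tmap] using this
    have h2 : ∑ j : {j : Fin (m + 1) // j ≠ 0}, Q k j * p.1 j = ∑ j, Q k j * x j := by
      rw [← sum_subtype_eq (fun j => Q k j * x j) (by simp [hx0])]
      refine Finset.sum_congr rfl fun j _ => ?_
      simp [hx, extVec, j.2]
    rw [h2] at h1; linarith
  -- key identity : ∑ j, Q k j * (x j - x k) = p.2
  have key2 : ∀ k, ∑ j, Q k j * (x j - x k) = p.2 := by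
    intro k
    have : ∑ j, Q k j * x k = x k := by
      rw [← Finset.sum_mul, hQrow, one_mul]
    calc ∑ j, Q k j * (x j - x k) = (∑ j, Q k j * x j) - ∑ j, Q k j * x k := by
          simp [mul_sub, Finset.sum_sub_distrib]
      _ = p.2 := by rw [this, key k]; ring
  obtain ⟨k0, -, hk0⟩ := Finset.exists_max_image Finset.univ x ⟨0, Finset.mem_univ 0⟩
  obtain ⟨k1, -, hk1⟩ := Finset.exists_min_image Finset.univ x ⟨0, Finset.mem_univ 0⟩
  have hy0 : p.2 ≤ 0 := by
    rw [← key2 k0]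
    refine Finset.sum_nonpos fun j _ => mul_nonpos_of_nonneg_of_nonpos (hQ k0 j) ?_
    have := hk0 j (Finset.mem_univ j); linarith
  have hy1 : 0 ≤ p.2 := by
    rw [← key2 k1]
    refine Finset.sum_nonneg fun j _ => mul_nonneg (hQ k1 j) ?_
    have := hk1 j (Finset.mem_univ j); linarith
  have hy : p.2 = 0 := le_antisymm hy0 hy1
  -- now x is harmonic; max and min are attained at 0
  have hmax : x k0 = 0 := by
    have hsum : ∑ j, Q k0 j * (x k0 - x j) = 0 := by
      have := key2 k0
      rw [hy] at this
      calc ∑ j, Q k0 j * (x k0 - x j) = -∑ j, Q k0 j * (x j - x k0) := by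
            rw [← Finset.sum_neg_distrib]; exact Finset.sum_congr rfl fun j _ => by ring
        _ = 0 := by rw [this, neg_zero]
    have hterm : Q k0 0 * (x k0 - x 0) = 0 := by
      have := (Finset.sum_eq_zero_iff_of_nonneg (fun j _ =>
        mul_nonneg (hQ k0 j) (by have := hk0 j (Finset.mem_univ j); linarith))).mp
        hsum 0 (Finset.mem_univ 0)
      exact this
    have := hQ0 k0
    have : x k0 - x 0 = 0 := by
      rcases mul_eq_zero.mp hterm with h | h
      · exact absurd h (ne_of_gt (hQ0 k0))
      · exact h
    linarith [hx0 ▸ this]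
  have hmin : x k1 = 0 := by
    have hsum : ∑ j, Q k1 j * (x j - x k1) = 0 := by rw [key2 k1, hy]
    have hterm : Q k1 0 * (x 0 - x k1) = 0 := by
      exact (Finset.sum_eq_zero_iff_of_nonneg (fun j _ =>
        mul_nonneg (hQ k1 j) (by have := hk1 j (Finset.mem_univ j); linarith))).mp
        hsum 0 (Finset.mem_univ 0)
    have : x 0 - x k1 = 0 := by
      rcases mul_eq_zero.mp hterm with h | h
      · exact absurd h (ne_of_gt (hQ0 k1))
      · exact h
    linarith [hx0 ▸ this]
  have hxall : ∀ k, x k = 0 := fun k =>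
    le_antisymm (hmax ▸ hk0 k (Finset.mem_univ k)) (hmin ▸ hk1 k (Finset.mem_univ k))
  have hp1 : p.1 = 0 := by
    funext j
    have := hxall j
    simpa [hx, extVec, j.2] using this
  exact Prod.ext hp1 hy

lemma Tmap_bij (Q : Fin (m + 1) → Fin (m + 1) → ℝ)
    (hQ : ∀ k j, 0 ≤ Q k j) (hQrow : ∀ k, ∑ j, Q k j = 1)
    (hQ0 : ∀ k, 0 < Q k 0) : Function.Bijective (Tmap Q) := by
  have hinj := Tmap_inj Q hQ hQrow hQ0
  have hrank : Module.finrank ℝ (({j : Fin (m + 1) // j ≠ 0} → ℝ) × ℝ)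
      = Module.finrank ℝ (Fin (m + 1) → ℝ) := by
    simp [Module.finrank_pi, Fintype.card_subtype_compl]
  exact ⟨hinj,
    (LinearMap.injective_iff_surjective_of_finrank_eq_finrank hrank).mp hinj⟩

end Aux

/-- For a row-stochastic matrix `Q` with `Q k 0 > 0` for every `k` and
arbitrary costs `L k`, there is a unique pair `(x, y)` with `x ∈ ℝ^{m−1}` (indexed
by the nonzero states) and `y ∈ ℝ` satisfying
`L 0 + ∑_{j≥1} Q 0 j * x j = y` and
`L k + ∑_{j≥1} Q k j * x j − x k = y` for all `k ≥ 1`.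
(`m ≥ 1` is encoded by using `m + 1` states.) -/
theorem stmt_3 (m : ℕ) (Q : Fin (m + 1) → Fin (m + 1) → ℝ)
    (hQ : ∀ k j, 0 ≤ Q k j) (hQrow : ∀ k, ∑ j, Q k j = 1)
    (hQ0 : ∀ k, 0 < Q k 0) (L : Fin (m + 1) → ℝ) :
    ∃! p : ({j : Fin (m + 1) // j ≠ 0} → ℝ) × ℝ,
      (L 0 + ∑ j : {j : Fin (m + 1) // j ≠ 0}, Q 0 j * p.1 j = p.2) ∧
      ∀ k : Fin (m + 1), (hk : k ≠ 0) →
        L k + (∑ j : {j : Fin (m + 1) // j ≠ 0}, Q k j * p.1 j) - p.1 ⟨k, hk⟩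
          = p.2 := by
  have hbij := Tmap_bij Q hQ hQrow hQ0
  have hiff : ∀ p : ({j : Fin (m + 1) // j ≠ 0} → ℝ) × ℝ,
      ((L 0 + ∑ j : {j : Fin (m + 1) // j ≠ 0}, Q 0 j * p.1 j = p.2) ∧
      ∀ k : Fin (m + 1), (hk : k ≠ 0) →
        L k + (∑ j : {j : Fin (m + 1) // j ≠ 0}, Q k j * p.1 j) - p.1 ⟨k, hk⟩
          = p.2) ↔ Tmap Q p = fun k => -L k := by
    intro p
    constructor
    · rintro ⟨h0, hk⟩
      funext k
      by_cases h : k ≠ 0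
      · have := hk k h
        simp only [Tmap, LinearMap.coe_mk, AddHom.coe_mk, extVec, dif_pos h]
        linarith
      · push_neg at h
        subst h
        simp [Tmap, extVec]
        linarith
    · intro h
      constructor
      · have := congrFun h 0
        simp [Tmap, extVec] at this
        linarith
      · intro k hk
        have := congrFun h k
        simp only [Tmap, LinearMap.coe_mk, AddHom.coe_mk, extVec, dif_pos hk] at this
        linarith
  rw [existsUnique_congr hiff]
  obtain ⟨p, hp⟩ := hbij.2 (fun k => -L k)
  exact ⟨p, hp, fun q hq => hbij.1 (hp ▸ hq)⟩
end

section
/- Let m ≥ 1 and let Q be an m × m real row-stochastic matrix indexed by {0,1,…,m−1} with Q_{k,0} > 0 for every k, let L₀,…,L_{m−1} be real numbers, and let π be a stationary distribution of Q (π nonnegative, Σ_k π_k = 1, πQ = π). If x = (x₁,…,x_{m−1}) ∈ ℝ^{m−1} and y ∈ ℝ satisfy L₀ + Σ_{j=1}^{m−1} Q_{0,j}·x_j = y and L_k + Σ_{j=1}^{m−1} Q_{k,j}·x_j − x_k = y for all k ∈ {1,…,m−1}, then y = Σ_{k=0}^{m−1} π_k·L_k. -/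
/-!
Extend `x` by `x₀ = 0`; then all `m + 1` hyperplane equations read `L + Q x - x = y`, a Poisson
equation for `Q`. Pairing it with the stationary distribution `π` kills `Q x - x`, since
`π ⬝ (Q x) = (π Q) ⬝ x = π ⬝ x`, and leaves `y = π ⬝ L`.
-/

open Matrix

theorem dotProduct_eq_of_poisson_eq {ι R : Type*} [Fintype ι] [CommRing R]
    (Q : Matrix ι ι R) (π L h : ι → R) (y : R)
    (hπ : ∑ i, π i = 1) (hstat : π ᵥ* Q = π)
    (hpoisson : ∀ k, L k + (Q *ᵥ h) k - h k = y) :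
    y = π ⬝ᵥ L := by
  have hcancel : π ⬝ᵥ (Q *ᵥ h) = π ⬝ᵥ h := by rw [dotProduct_mulVec, hstat]
  calc y = π ⬝ᵥ (L + Q *ᵥ h - h) := by
        simp only [dotProduct, Pi.add_apply, Pi.sub_apply, hpoisson, ← Finset.sum_mul, hπ,
          one_mul]
    _ = π ⬝ᵥ L := by rw [dotProduct_sub, dotProduct_add, hcancel, add_sub_cancel_right]

theorem mulVec_update_zero_apply {ι R : Type*} [Fintype ι] [DecidableEq ι] [CommRing R]
    (Q : Matrix ι ι R) (x : ι → R) (i₀ k : ι) :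
    (Q *ᵥ Function.update x i₀ 0) k = ∑ j ∈ Finset.univ.erase i₀, Q k j * x j := by
  rw [mulVec, dotProduct, ← Finset.add_sum_erase _ _ (Finset.mem_univ i₀),
    Function.update_self, mul_zero, zero_add]
  exact Finset.sum_congr rfl fun j hj => by
    rw [Function.update_of_ne (Finset.ne_of_mem_erase hj)]

theorem stmt_4_general (m : ℕ) (Q : Fin (m + 1) → Fin (m + 1) → ℝ)
    (L : Fin (m + 1) → ℝ)
    (pr : Fin (m + 1) → ℝ) (hprsum : ∑ k, pr k = 1)
    (hstat : ∀ j, ∑ k, pr k * Q k j = pr j)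
    (x : Fin (m + 1) → ℝ) (y : ℝ)
    (h0 : L 0 + ∑ j ∈ Finset.univ.erase 0, Q 0 j * x j = y)
    (hk : ∀ k : Fin (m + 1), k ≠ 0 →
      L k + (∑ j ∈ Finset.univ.erase 0, Q k j * x j) - x k = y) :
    y = ∑ k, pr k * L k := by
  refine dotProduct_eq_of_poisson_eq (Matrix.of Q) pr L (Function.update x 0 0) y hprsum
    (funext hstat) fun k => ?_
  rw [mulVec_update_zero_apply]
  rcases eq_or_ne k 0 with rfl | hk0
  · simpa using h0
  · simpa [Function.update_of_ne hk0] using hk k hk0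

/-- If `(x, y)` is a multi-typed intersection point of the hyperplanes
of a row-stochastic matrix `Q` (with `Q k 0 > 0` for all `k`) with costs `L k`,
and `pr` is a stationary distribution of `Q`, then the height `y` equals the gain
`∑ k, pr k * L k`.  (`m ≥ 1` is encoded by using `m + 1` states.) -/
theorem stmt_4 (m : ℕ) (Q : Fin (m + 1) → Fin (m + 1) → ℝ)
    (hQ : ∀ k j, 0 ≤ Q k j) (hQrow : ∀ k, ∑ j, Q k j = 1)
    (hQ0 : ∀ k, 0 < Q k 0) (L : Fin (m + 1) → ℝ)
    (pr : Fin (m + 1) → ℝ) (hpr : ∀ k, 0 ≤ pr k) (hprsum : ∑ k, pr k = 1)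
    (hstat : ∀ j, ∑ k, pr k * Q k j = pr j)
    (x : Fin (m + 1) → ℝ) (y : ℝ)
    (h0 : L 0 + ∑ j ∈ Finset.univ.erase 0, Q 0 j * x j = y)
    (hk : ∀ k : Fin (m + 1), k ≠ 0 →
      L k + (∑ j ∈ Finset.univ.erase 0, Q k j * x j) - x k = y) :
    y = ∑ k, pr k * L k :=
  stmt_4_general m Q L pr hprsum hstat x y h0 hk
end

section
/- Let m ≥ 1 and let Q be an m × m real row-stochastic matrix indexed by {0,1,…,m−1}, let π be a stationary distribution of Q (π nonnegative, Σ_k π_k = 1, πQ = π), and let L₀,…,L_{m−1} be real numbers. Define f₀(x) = L₀ + Σ_{j=1}^{m−1} Q_{0,j}·x_j and f_k(x) = L_k + Σ_{j=1}^{m−1} Q_{k,j}·x_j − x_k for k ∈ {1,…,m−1}. Suppose x* ∈ ℝ^{m−1} and y ∈ ℝ satisfy f_k(x*) = y for all k ∈ {0,…,m−1}. Then for every x' ∈ ℝ^{m−1}, min_{k ∈ {0,…,m−1}} f_k(x') ≤ y. -/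
/-- If `(x*, y)` is a point at which all the hyperplanes
`f_k(x) = L k + ∑_{j≥1} Q k j * x j − (x k if k ≥ 1)` of a row-stochastic matrix
`Q` with stationary distribution `pr` take the common value `y`, then at every
point `x'` the lower envelope `min_k f_k(x')` is at most `y`.
(`m ≥ 1` is encoded by using `m + 1` states.) -/
theorem stmt_5 (m : ℕ) (Q : Fin (m + 1) → Fin (m + 1) → ℝ)
    (hQ : ∀ k j, 0 ≤ Q k j) (hQrow : ∀ k, ∑ j, Q k j = 1)
    (pr : Fin (m + 1) → ℝ) (hpr : ∀ k, 0 ≤ pr k) (hprsum : ∑ k, pr k = 1)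
    (hstat : ∀ j, ∑ k, pr k * Q k j = pr j)
    (L : Fin (m + 1) → ℝ)
    (f : (Fin (m + 1) → ℝ) → Fin (m + 1) → ℝ)
    (hf : ∀ x k, f x k = L k + (∑ j ∈ Finset.univ.erase 0, Q k j * x j) -
      (if k = 0 then 0 else x k))
    (xstar : Fin (m + 1) → ℝ) (y : ℝ)
    (hinter : ∀ k, f xstar k = y) :
    ∀ x' : Fin (m + 1) → ℝ,
      Finset.univ.inf' Finset.univ_nonempty (f x') ≤ y := by
  intro x'
  -- Key: the weighted average ∑ pr k * f x k does not depend on x.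
  have key : ∀ x : Fin (m + 1) → ℝ, ∑ k, pr k * f x k = ∑ k, pr k * L k := by
    intro x
    have h1 : ∑ k, pr k * f x k =
        (∑ k, pr k * L k)
        + (∑ k, ∑ j ∈ Finset.univ.erase 0, pr k * (Q k j * x j))
        - ∑ k, (if k = 0 then (0:ℝ) else pr k * x k) := by
      rw [← Finset.sum_add_distrib, ← Finset.sum_sub_distrib]
      refine Finset.sum_congr rfl fun k _ => ?_
      rw [hf x k, mul_sub, mul_add, Finset.mul_sum, mul_ite, mul_zero]
    have h2 : (∑ k, ∑ j ∈ Finset.univ.erase 0, pr k * (Q k j * x j))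
        = ∑ j ∈ Finset.univ.erase 0, pr j * x j := by
      rw [Finset.sum_comm]
      refine Finset.sum_congr rfl fun j _ => ?_
      have : ∑ k, pr k * (Q k j * x j) = (∑ k, pr k * Q k j) * x j := by
        rw [Finset.sum_mul]; exact Finset.sum_congr rfl fun k _ => by ring
      rw [this, hstat j]
    have h3 : (∑ k, (if k = 0 then (0:ℝ) else pr k * x k))
        = ∑ k ∈ Finset.univ.erase 0, pr k * x k := by
      rw [← Finset.sum_erase Finset.univ
        (f := fun k => if k = 0 then (0:ℝ) else pr k * x k) (a := 0) (by simp)]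
      exact Finset.sum_congr rfl fun k hk => if_neg (Finset.ne_of_mem_erase hk)
    rw [h1, h2, h3]
    ring
  have hy : ∑ k, pr k * f x' k = y := by
    rw [key x', ← key xstar]
    have : ∑ k, pr k * f xstar k = ∑ k, pr k * y := by
      exact Finset.sum_congr rfl fun k _ => by rw [hinter k]
    rw [this, ← Finset.sum_mul, hprsum, one_mul]
  calc Finset.univ.inf' Finset.univ_nonempty (f x')
      = ∑ k, pr k * Finset.univ.inf' Finset.univ_nonempty (f x') := by
        rw [← Finset.sum_mul, hprsum, one_mul]
    _ ≤ ∑ k, pr k * f x' k :=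
        Finset.sum_le_sum fun k _ => mul_le_mul_of_nonneg_left
          (Finset.inf'_le _ (Finset.mem_univ k)) (hpr k)
    _ = y := hy
end
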